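/- arXiv:math/0210098 — 3 statements merged into one kernel-verified Lean document; each statement's English description precedes it below -/
import Mathlib

section
/- Let A be a complete normed ring (Banach algebra), let s ≤ t be real numbers, and let f : ℝ → A be Bochner integrable on [s,t]. Then for every k ≥ 1 the k-fold iterated (time-ordered) Bochner integral satisfies ‖∫_s^t f(t₁) · (∫_s^{t₁} f(t₂) · ( ⋯ · (∫_s^{t_{k−1}} f(t_k) dt_k) ⋯ ) dt₂) dt₁‖ ≤ (1/k!) · (∫_s^t ‖f(τ)‖ dτ)^k. -/
open MeasureTheory intervalIntegral

/-- The `k`-fold time-ordered iterated Bochner integral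
`∫_s^t f(t₁) (∫_s^{t₁} f(t₂) ( ⋯ (∫_s^{t_{k−1}} f(t_k) dt_k) ⋯ ) dt₂) dt₁`,
defined inductively: depth `0` is `1`, and depth `k+1` is
`∫_s^t f(τ) * (depth-k iterated integral up to τ) dτ`. -/
noncomputable def timeOrderedIntegral {A : Type*} [NormedRing A] [NormedSpace ℝ A] (f : ℝ → A) (s : ℝ) :
    ℕ → ℝ → A
  | 0, _ => 1
  | k + 1, t => ∫ τ in s..t, f τ * timeOrderedIntegral f s k τ

lemma pow_tangent_aux {a b : ℝ} (hb : 0 ≤ b) (hba : b ≤ a) (k : ℕ) :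
    ((k : ℝ) + 1) * b ^ k * (a - b) ≤ a ^ (k + 1) - b ^ (k + 1) := by
  rw [← geom_sum₂_mul a b (k + 1)]
  have h1 : ((k : ℝ) + 1) * b ^ k ≤ ∑ i ∈ Finset.range (k + 1), a ^ i * b ^ (k - i) := by
    have := Finset.sum_le_sum (s := Finset.range (k + 1))
      (f := fun _ : ℕ => b ^ k) (g := fun i => a ^ i * b ^ (k - i)) ?_
    · simpa [Finset.sum_const, mul_comm] using this
    · intro i hi
      have hi' : i ≤ k := Nat.lt_succ_iff.mp (Finset.mem_range.mp hi)
      have : b ^ k = b ^ i * b ^ (k - i) := by rw [← pow_add]; congr 1; omega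
      rw [this]
      exact mul_le_mul_of_nonneg_right (pow_le_pow_left₀ hb hba i) (pow_nonneg hb _)
  exact mul_le_mul_of_nonneg_right h1 (by linarith)

lemma sum_pow_step_le (d : ℝ) (hd : 0 ≤ d) (k n : ℕ) :
    (∑ i ∈ Finset.range n, (((i : ℝ) + 1) * d) ^ k * d) ≤
      ((n : ℝ) * d) ^ (k + 1) / ((k : ℝ) + 1) + ((n : ℝ) * d) ^ k * d := by
  have hk1 : (0 : ℝ) < (k : ℝ) + 1 := by positivity
  have hterm : ∀ i : ℕ, (((i : ℝ) + 1) * d) ^ k * d ≤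
      ((((i : ℝ) + 1) * d) ^ (k + 1) / ((k : ℝ) + 1) - ((i : ℝ) * d) ^ (k + 1) / ((k : ℝ) + 1))
        + ((((i : ℝ) + 1) * d) ^ k - ((i : ℝ) * d) ^ k) * d := by
    intro i
    set b := (i : ℝ) * d with hbdef
    set a := ((i : ℝ) + 1) * d with hadef
    have hb : 0 ≤ b := by positivity
    have hab : a - b = d := by rw [hadef, hbdef]; ring
    have hba : b ≤ a := by linarith
    have ht := pow_tangent_aux hb hba k
    have h1 : b ^ k * d ≤ (a ^ (k + 1) - b ^ (k + 1)) / ((k : ℝ) + 1) := by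
      rw [le_div_iff₀ hk1]
      rw [hab] at ht
      nlinarith [ht]
    have h2 : a ^ k * d = b ^ k * d + (a ^ k - b ^ k) * d := by ring
    rw [h2, sub_div] at *
    linarith
  calc (∑ i ∈ Finset.range n, (((i : ℝ) + 1) * d) ^ k * d)
      ≤ ∑ i ∈ Finset.range n,
          (((((i : ℝ) + 1) * d) ^ (k + 1) / ((k : ℝ) + 1) - ((i : ℝ) * d) ^ (k + 1) / ((k : ℝ) + 1))
            + ((((i : ℝ) + 1) * d) ^ k - ((i : ℝ) * d) ^ k) * d) :=
        Finset.sum_le_sum fun i _ => hterm i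
    _ = (((n : ℝ) * d) ^ (k + 1) / ((k : ℝ) + 1) - ((0 : ℝ) * d) ^ (k + 1) / ((k : ℝ) + 1))
          + (((n : ℝ) * d) ^ k - ((0 : ℝ) * d) ^ k) * d := by
        rw [Finset.sum_add_distrib]
        congr 1
        · have := Finset.sum_range_sub (fun i : ℕ => ((i : ℝ) * d) ^ (k + 1) / ((k : ℝ) + 1)) n
          push_cast at this ⊢
          rw [← this]
        · rw [← Finset.sum_mul]
          have := Finset.sum_range_sub (fun i : ℕ => ((i : ℝ) * d) ^ k) n
          push_cast at this ⊢
          rw [← this]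
    _ ≤ ((n : ℝ) * d) ^ (k + 1) / ((k : ℝ) + 1) + ((n : ℝ) * d) ^ k * d := by
        simp only [zero_mul, zero_pow (Nat.succ_ne_zero k), zero_div, sub_zero]
        rw [sub_mul]
        have h1 : (0 : ℝ) ≤ 0 ^ k * d := mul_nonneg (pow_nonneg le_rfl k) hd
        linarith

lemma key_integral_pow_le {g : ℝ → ℝ} {s t : ℝ} (hst : s ≤ t)
    (hg : IntervalIntegrable g volume s t) (hg0 : ∀ x, 0 ≤ g x) (k : ℕ) :
    (∫ τ in s..t, g τ * (∫ σ in s..τ, g σ) ^ k) ≤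
      (∫ τ in s..t, g τ) ^ (k + 1) / ((k : ℝ) + 1) := by
  set G : ℝ → ℝ := fun u => ∫ σ in s..u, g σ with hGdef
  have hsmem : s ∈ Set.Icc s t := ⟨le_rfl, hst⟩
  have htmem : t ∈ Set.Icc s t := ⟨hst, le_rfl⟩
  have hsubset : ∀ a ∈ Set.Icc s t, ∀ b ∈ Set.Icc s t, Set.uIcc a b ⊆ Set.Icc s t := by
    intro a ha b hb
    rw [← Set.uIcc_of_le hst]
    exact Set.uIcc_subset_uIcc (by rwa [Set.uIcc_of_le hst]) (by rwa [Set.uIcc_of_le hst])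
  have hsub : ∀ a ∈ Set.Icc s t, ∀ b ∈ Set.Icc s t, IntervalIntegrable g volume a b := by
    intro a ha b hb
    exact hg.mono_set (by rw [Set.uIcc_of_le hst]; exact hsubset a ha b hb)
  have hGcont : ContinuousOn G (Set.Icc s t) := by
    have := intervalIntegral.continuousOn_primitive_interval' hg Set.left_mem_uIcc
    rwa [Set.uIcc_of_le hst] at this
  have hGadd : ∀ a ∈ Set.Icc s t, ∀ b ∈ Set.Icc s t, G b - G a = ∫ τ in a..b, g τ := by
    intro a ha b hb
    have h := intervalIntegral.integral_add_adjacent_intervals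
      (hsub s hsmem a ha) (hsub a ha b hb)
    simp only [hGdef]
    linarith [h]
  have hGmono : ∀ a ∈ Set.Icc s t, ∀ b ∈ Set.Icc s t, a ≤ b → G a ≤ G b := by
    intro a ha b hb hab
    have h1 := hGadd a ha b hb
    have h2 : 0 ≤ ∫ τ in a..b, g τ :=
      intervalIntegral.integral_nonneg hab fun u _ => hg0 u
    linarith
  have hGs : G s = 0 := intervalIntegral.integral_same
  have hGnn : ∀ a ∈ Set.Icc s t, 0 ≤ G a := fun a ha => by
    have := hGmono s hsmem a ha ha.1; linarith [hGs]
  have hIint : ∀ a ∈ Set.Icc s t, ∀ b ∈ Set.Icc s t,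
      IntervalIntegrable (fun τ => g τ * G τ ^ k) volume a b := by
    intro a ha b hb
    exact (hsub a ha b hb).mul_continuousOn ((hGcont.pow k).mono (hsubset a ha b hb))
  have hup : ∀ a ∈ Set.Icc s t, ∀ b ∈ Set.Icc s t, a ≤ b →
      (∫ τ in a..b, g τ * G τ ^ k) ≤ G b ^ k * (G b - G a) := by
    intro a ha b hb hab
    have h1 : (∫ τ in a..b, g τ * G τ ^ k) ≤ ∫ τ in a..b, g τ * G b ^ k := by
      refine intervalIntegral.integral_mono_on hab (hIint a ha b hb)
        ((hsub a ha b hb).mul_const _) ?_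
      intro x hx
      have hxmem : x ∈ Set.Icc s t := ⟨ha.1.trans hx.1, hx.2.trans hb.2⟩
      exact mul_le_mul_of_nonneg_left
        (pow_le_pow_left₀ (hGnn x hxmem) (hGmono x hxmem b hb hx.2) k) (hg0 x)
    rw [intervalIntegral.integral_mul_const] at h1
    rw [hGadd a ha b hb]
    linarith [h1]
  have hc0 : 0 ≤ G t := hGnn t htmem
  rcases eq_or_lt_of_le hc0 with hc | hc
  · -- G t = 0
    have h1 := hup s hsmem t htmem hst
    rw [hGs, ← hc] at h1
    have h2 : (0 : ℝ) ≤ (G t) ^ (k + 1) / ((k : ℝ) + 1) := by positivity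
    simp only [hGdef] at h1 h2 ⊢
    nlinarith [h1, h2]
  · -- 0 < G t
    set c : ℝ := G t with hcdef
    have hmain : ∀ n : ℕ, 0 < n →
        (∫ τ in s..t, g τ * G τ ^ k) ≤ c ^ (k + 1) / ((k : ℝ) + 1) + c ^ (k + 1) / n := by
      intro n hn
      have hnR : (0 : ℝ) < n := by exact_mod_cast hn
      set d : ℝ := c / n with hddef
      have hd0 : 0 ≤ d := by positivity
      -- choose partition points
      have hch : ∀ i : ℕ, ∃ x, i ≤ n → x ∈ Set.Icc s t ∧ G x = i * d := by
        intro i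
        by_cases hi : i ≤ n
        · have h1 : (i : ℝ) * d ∈ Set.Icc (G s) (G t) := by
            rw [hGs]
            constructor
            · positivity
            · have : (i : ℝ) ≤ n := by exact_mod_cast hi
              rw [hddef]
              rw [mul_div_assoc'] at *
              rw [div_le_iff₀ hnR]
              nlinarith
          obtain ⟨x, hx, hGx⟩ := intermediate_value_Icc hst hGcont h1
          exact ⟨x, fun _ => ⟨hx, hGx⟩⟩
        · exact ⟨t, fun h => absurd h hi⟩
      choose x hxp using hch
      have hxmem : ∀ i ≤ n, x i ∈ Set.Icc s t := fun i hi => (hxp i hi).1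
      have hxval : ∀ i ≤ n, G (x i) = i * d := fun i hi => (hxp i hi).2
      have hmono : ∀ i < n, x i ≤ x (i + 1) := by
        intro i hi
        by_contra hlt
        push_neg at hlt
        have h1 := hGmono (x (i + 1)) (hxmem _ hi) (x i) (hxmem _ hi.le) hlt.le
        rw [hxval _ hi, hxval _ hi.le] at h1
        push_cast at h1
        have hd : 0 < d := by positivity
        nlinarith
      -- decompose the integral
      have hA : (∫ τ in s..(x 0), g τ * G τ ^ k) + (∫ τ in (x 0)..(x n), g τ * G τ ^ k)
          = ∫ τ in s..(x n), g τ * G τ ^ k :=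
        intervalIntegral.integral_add_adjacent_intervals
          (hIint s hsmem _ (hxmem 0 n.zero_le)) (hIint _ (hxmem 0 n.zero_le) _ (hxmem n le_rfl))
      have hB : (∫ τ in s..(x n), g τ * G τ ^ k) + (∫ τ in (x n)..t, g τ * G τ ^ k)
          = ∫ τ in s..t, g τ * G τ ^ k :=
        intervalIntegral.integral_add_adjacent_intervals
          (hIint s hsmem _ (hxmem n le_rfl)) (hIint _ (hxmem n le_rfl) t htmem)
      have hsum : (∑ i ∈ Finset.range n, ∫ τ in (x i)..(x (i + 1)), g τ * G τ ^ k)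
          = ∫ τ in (x 0)..(x n), g τ * G τ ^ k :=
        intervalIntegral.sum_integral_adjacent_intervals fun i hi =>
          hIint _ (hxmem i hi.le) _ (hxmem (i + 1) hi)
      -- bound each piece
      have hG0 : G (x 0) = 0 := by
        have := hxval 0 n.zero_le; simpa using this
      have hGn : G (x n) = c := by
        have := hxval n le_rfl
        rw [this, hddef, mul_div_assoc']
        field_simp
      have hpre : (∫ τ in s..(x 0), g τ * G τ ^ k) ≤ 0 := by
        have h1 := hup s hsmem (x 0) (hxmem 0 n.zero_le) (hxmem 0 n.zero_le).1
        rw [hG0, hGs] at h1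
        simpa using h1
      have hpost : (∫ τ in (x n)..t, g τ * G τ ^ k) ≤ 0 := by
        have h1 := hup (x n) (hxmem n le_rfl) t htmem (hxmem n le_rfl).2
        rw [hGn, ← hcdef] at h1
        simpa using h1
      have hmid : (∑ i ∈ Finset.range n, ∫ τ in (x i)..(x (i + 1)), g τ * G τ ^ k)
          ≤ ∑ i ∈ Finset.range n, (((i : ℝ) + 1) * d) ^ k * d := by
        refine Finset.sum_le_sum fun i hi => ?_
        have hi' := Finset.mem_range.mp hi
        have h1 := hup (x i) (hxmem i hi'.le) (x (i + 1)) (hxmem (i + 1) hi') (hmono i hi')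
        rw [hxval i hi'.le, hxval (i + 1) hi'] at h1
        push_cast at h1
        calc (∫ τ in (x i)..(x (i + 1)), g τ * G τ ^ k)
            ≤ (((i : ℝ) + 1) * d) ^ k * (((i : ℝ) + 1) * d - (i : ℝ) * d) := h1
          _ = (((i : ℝ) + 1) * d) ^ k * d := by ring_nf
      have hndc : (n : ℝ) * d = c := by
        rw [hddef]; field_simp
      have hfinal := sum_pow_step_le d hd0 k n
      rw [hndc] at hfinal
      have hckn : c ^ k * d = c ^ (k + 1) / n := by
        rw [hddef]; field_simp; ring
      rw [hckn] at hfinal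
      linarith [hA, hB, hsum, hpre, hpost, hmid, hfinal]
    -- pass to the limit
    rw [show (∫ τ in s..t, g τ) = c from rfl] at *
    refine le_of_forall_pos_le_add fun ε hε => ?_
    obtain ⟨n, hn⟩ := exists_nat_gt (c ^ (k + 1) / ε)
    have hnpos : 0 < n := by
      have h1 : (0 : ℝ) < c ^ (k + 1) / ε := by positivity
      exact_mod_cast Nat.pos_of_ne_zero fun h => by simp [h] at hn; linarith
    have h2 := hmain n hnpos
    have hnR : (0 : ℝ) < n := by exact_mod_cast hnpos
    have h3 : c ^ (k + 1) / n < ε := by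
      rw [div_lt_iff₀ hnR]
      rw [div_lt_iff₀ hε] at hn
      linarith
    linarith

theorem iterated_time_ordered_integral_norm_le
    {A : Type*} [NormedRing A] [NormedSpace ℝ A] [CompleteSpace A]
    (f : ℝ → A) (s t : ℝ) (hst : s ≤ t)
    (hf : IntervalIntegrable f MeasureTheory.volume s t)
    (k : ℕ) (hk : 1 ≤ k) :
    ‖timeOrderedIntegral f s k t‖ ≤
      (1 / (Nat.factorial k : ℝ)) * (∫ τ in s..t, ‖f τ‖) ^ k := by
  have hsubset : ∀ u ∈ Set.Icc s t, Set.uIcc s u ⊆ Set.uIcc s t := by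
    intro u hu
    rw [Set.uIcc_of_le hst, Set.uIcc_of_le hu.1]
    exact Set.Icc_subset_Icc le_rfl hu.2
  have main : ∀ k : ℕ, ContinuousOn (timeOrderedIntegral f s k) (Set.Icc s t) ∧
      ∀ u ∈ Set.Icc s t,
        IntervalIntegrable (fun τ => f τ * timeOrderedIntegral f s k τ) volume s u := by
    intro k
    induction k with
    | zero =>
      refine ⟨?_, ?_⟩
      · have : timeOrderedIntegral f s 0 = fun _ => (1 : A) := rfl
        rw [this]
        exact continuousOn_const
      · intro u hu
        have heq : (fun τ => f τ * timeOrderedIntegral f s 0 τ) = f := by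
          funext τ
          show f τ * 1 = f τ
          rw [mul_one]
        rw [heq]
        exact hf.mono_set (hsubset u hu)
    | succ k ih =>
      have hint : IntervalIntegrable (fun τ => f τ * timeOrderedIntegral f s k τ) volume s t :=
        ih.2 t ⟨hst, le_rfl⟩
      have hcont : ContinuousOn (timeOrderedIntegral f s (k + 1)) (Set.Icc s t) := by
        have h := intervalIntegral.continuousOn_primitive_interval' hint Set.left_mem_uIcc
        rw [Set.uIcc_of_le hst] at h
        exact h
      refine ⟨hcont, fun u hu => ?_⟩
      refine (hf.mono_set (hsubset u hu)).mul_continuousOn ?_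
      refine hcont.mono ?_
      rw [Set.uIcc_of_le hu.1]
      exact Set.Icc_subset_Icc le_rfl hu.2
  have hGcont : ContinuousOn (fun u => ∫ σ in s..u, ‖f σ‖) (Set.Icc s t) := by
    have h := intervalIntegral.continuousOn_primitive_interval' hf.norm Set.left_mem_uIcc
    rw [Set.uIcc_of_le hst] at h
    exact h
  have hbound : ∀ k : ℕ, ∀ u ∈ Set.Icc s t,
      ‖timeOrderedIntegral f s (k + 1) u‖ ≤
        (∫ τ in s..u, ‖f τ‖) ^ (k + 1) / (Nat.factorial (k + 1) : ℝ) := by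
    intro k
    induction k with
    | zero =>
      intro u hu
      have h1 : timeOrderedIntegral f s 1 u = ∫ τ in s..u, f τ := by
        show (∫ τ in s..u, f τ * timeOrderedIntegral f s 0 τ) = _
        congr 1
        funext τ
        show f τ * 1 = f τ
        rw [mul_one]
      rw [h1]
      have h2 := intervalIntegral.norm_integral_le_integral_norm (f := f) (μ := volume) hu.1
      simpa [Nat.factorial] using h2
    | succ k ih =>
      intro u hu
      have huu : u ∈ Set.Icc s u := ⟨hu.1, le_rfl⟩
      have hgu : IntervalIntegrable (fun τ => ‖f τ‖) volume s u :=
        (hf.mono_set (hsubset u hu)).norm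
      have h1 : ‖timeOrderedIntegral f s (k + 1 + 1) u‖ ≤
          ∫ τ in s..u, ‖f τ * timeOrderedIntegral f s (k + 1) τ‖ := by
        have : timeOrderedIntegral f s (k + 1 + 1) u =
            ∫ τ in s..u, f τ * timeOrderedIntegral f s (k + 1) τ := rfl
        rw [this]
        exact intervalIntegral.norm_integral_le_integral_norm hu.1
      have h2 : (∫ τ in s..u, ‖f τ * timeOrderedIntegral f s (k + 1) τ‖) ≤
          ∫ τ in s..u, ‖f τ‖ * ((∫ σ in s..τ, ‖f σ‖) ^ (k + 1) / (Nat.factorial (k + 1) : ℝ)) := by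
        refine intervalIntegral.integral_mono_on hu.1 ((main (k + 1)).2 u hu).norm ?_ ?_
        · refine hgu.mul_continuousOn ?_
          refine (((hGcont.pow (k + 1)).div_const _).mono ?_)
          rw [Set.uIcc_of_le hu.1]
          exact Set.Icc_subset_Icc le_rfl hu.2
        · intro x hx
          have hxt : x ∈ Set.Icc s t := ⟨hx.1, hx.2.trans hu.2⟩
          calc ‖f x * timeOrderedIntegral f s (k + 1) x‖
              ≤ ‖f x‖ * ‖timeOrderedIntegral f s (k + 1) x‖ := norm_mul_le _ _
            _ ≤ ‖f x‖ * ((∫ σ in s..x, ‖f σ‖) ^ (k + 1) / (Nat.factorial (k + 1) : ℝ)) :=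
                mul_le_mul_of_nonneg_left (ih x hxt) (norm_nonneg _)
      have h3 : (∫ τ in s..u, ‖f τ‖ * ((∫ σ in s..τ, ‖f σ‖) ^ (k + 1) / (Nat.factorial (k + 1) : ℝ)))
          = (∫ τ in s..u, ‖f τ‖ * (∫ σ in s..τ, ‖f σ‖) ^ (k + 1)) / (Nat.factorial (k + 1) : ℝ) := by
        rw [← intervalIntegral.integral_div]
        congr 1
        funext τ
        rw [mul_div_assoc]
      have h4 : (∫ τ in s..u, ‖f τ‖ * (∫ σ in s..τ, ‖f σ‖) ^ (k + 1)) ≤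
          (∫ τ in s..u, ‖f τ‖) ^ (k + 1 + 1) / ((k : ℝ) + 1 + 1) := by
        have := key_integral_pow_le hu.1 hgu (fun x => norm_nonneg (f x)) (k + 1)
        push_cast at this ⊢
        exact this
      have hfac : (0 : ℝ) < (Nat.factorial (k + 1) : ℝ) := by
        exact_mod_cast Nat.factorial_pos (k + 1)
      have h5 : (∫ τ in s..u, ‖f τ‖ * (∫ σ in s..τ, ‖f σ‖) ^ (k + 1)) / (Nat.factorial (k + 1) : ℝ)
          ≤ ((∫ τ in s..u, ‖f τ‖) ^ (k + 1 + 1) / ((k : ℝ) + 1 + 1)) / (Nat.factorial (k + 1) : ℝ) :=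
        by gcongr
      have h6 : ((∫ τ in s..u, ‖f τ‖) ^ (k + 1 + 1) / ((k : ℝ) + 1 + 1)) / (Nat.factorial (k + 1) : ℝ)
          = (∫ τ in s..u, ‖f τ‖) ^ (k + 1 + 1) / (Nat.factorial (k + 1 + 1) : ℝ) := by
        rw [div_div]
        congr 1
        have hfe : (Nat.factorial (k + 1 + 1) : ℝ)
            = ((k + 1 + 1 : ℕ) : ℝ) * (Nat.factorial (k + 1) : ℝ) := by
          rw [Nat.factorial_succ]
          push_cast
          ring
        rw [hfe]
        push_cast
        ring
      linarith [h1, h2, h3.le, h3.ge, h5, h6.le, h6.ge]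
  obtain ⟨m, rfl⟩ : ∃ m, k = m + 1 := ⟨k - 1, (Nat.succ_pred_eq_of_pos hk).symm⟩
  have h := hbound m t ⟨hst, le_rfl⟩
  rw [one_div_mul_eq_div]
  exact h
end

section
/- Let A be a complete normed ring with unit 1, let R : ℝ → A be Bochner measurable and β : ℝ → ℝ integrable on ℝ with ‖R(τ)‖ ≤ β(τ) for almost every τ. Then for all real s ≤ t the Dyson series Σ_{k≥1} i^k ∫_s^t R(t₁)∫_s^{t₁} R(t₂) ⋯ ∫_s^{t_{k−1}} R(t_k) dt_k ⋯ dt₁ is absolutely convergent (summable in norm) in A. -/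
open MeasureTheory intervalIntegral Filter Topology

/-!
With `F τ = ∫_s^τ β`, the `k`-th iterated integral is bounded by `‖1‖ F(τ)^k / k!`: `F` is
absolutely continuous with `F' = β` a.e., so the fundamental theorem of calculus gives
`∫_s^τ β F^k = F(τ)^(k+1) / (k+1)`, which closes the induction. The Dyson series is therefore
dominated termwise by the exponential series of `F t`.
-/

open Set
open scoped Nat

theorem AbsolutelyContinuousOnInterval.fun_pow {f : ℝ → ℝ} {a b : ℝ}
    (hf : AbsolutelyContinuousOnInterval f a b) (n : ℕ) :
    AbsolutelyContinuousOnInterval (fun x ↦ f x ^ n) a b := by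
  induction n with
  | zero =>
    simpa using (LipschitzWith.const (1 : ℝ)).lipschitzOnWith.absolutelyContinuousOnInterval
  | succ n ih => simpa only [pow_succ] using ih.fun_mul hf

theorem intervalIntegral.integral_mul_primitive_pow {g : ℝ → ℝ} {a b : ℝ}
    (hg : IntervalIntegrable g volume a b) (k : ℕ) :
    ∫ x in a..b, g x * (∫ y in a..x, g y) ^ k = (∫ y in a..b, g y) ^ (k + 1) / (k + 1) := by
  set F : ℝ → ℝ := fun x ↦ ∫ y in a..x, g y
  have hF := (hg.absolutelyContinuousOnInterval_intervalIntegral left_mem_uIcc).fun_pow (k + 1)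
  have hderiv : ∀ᵐ x, x ∈ uIoc a b →
      deriv (fun x ↦ F x ^ (k + 1)) x = (k + 1) * (g x * F x ^ k) := by
    filter_upwards [hg.ae_hasDerivAt_integral] with x hx hxab
    rw [((hx (uIoc_subset_uIcc hxab) a left_mem_uIcc).fun_pow (k + 1)).deriv]
    push_cast
    ring
  rw [eq_div_iff (by positivity), mul_comm, ← integral_const_mul,
    ← integral_congr_ae hderiv, hF.integral_deriv_eq_sub]
  simp

theorem norm_timeOrderedIntegral_le {A : Type*} [NormedRing A] [NormedSpace ℝ A]
    {f : ℝ → A} {g : ℝ → ℝ} {s t : ℝ} (hg : IntervalIntegrable g volume s t)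
    (hfg : ∀ᵐ τ, τ ∈ Ioc s t → ‖f τ‖ ≤ g τ) (k : ℕ) {τ : ℝ} (hτ : τ ∈ Icc s t) :
    ‖timeOrderedIntegral f s k τ‖ ≤ ‖(1 : A)‖ * ((∫ u in s..τ, g u) ^ k / k !) := by
  induction k generalizing τ with
  | zero => simp [timeOrderedIntegral]
  | succ k ih =>
    set F : ℝ → ℝ := fun x ↦ ∫ u in s..x, g u
    have hgτ : IntervalIntegrable g volume s τ :=
      hg.mono_set (uIcc_subset_uIcc_left (Icc_subset_uIcc hτ))
    have hbound : ∀ᵐ u, u ∈ Ioc s τ →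
        ‖f u * timeOrderedIntegral f s k u‖ ≤ g u * (‖(1 : A)‖ * (F u ^ k / k !)) := by
      filter_upwards [hfg] with u hfgu hu
      have hu' : u ∈ Ioc s t := ⟨hu.1, hu.2.trans hτ.2⟩
      exact (norm_mul_le _ _).trans <| mul_le_mul (hfgu hu') (ih ⟨hu.1.le, hu'.2⟩)
        (norm_nonneg _) ((norm_nonneg _).trans (hfgu hu'))
    have hF : ContinuousOn F (uIcc s τ) := continuousOn_primitive_interval' hgτ left_mem_uIcc
    calc ‖timeOrderedIntegral f s (k + 1) τ‖
        ≤ ∫ u in s..τ, g u * (‖(1 : A)‖ * (F u ^ k / k !)) :=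
          norm_integral_le_of_norm_le hτ.1 hbound <|
            hgτ.mul_continuousOn (continuousOn_const.mul ((hF.pow k).div_const _))
      _ = ‖(1 : A)‖ / k ! * ∫ u in s..τ, g u * F u ^ k := by
          rw [← intervalIntegral.integral_const_mul]
          congr 1 with u
          ring
      _ = ‖(1 : A)‖ * (F τ ^ (k + 1) / (k + 1)!) := by
          rw [integral_mul_primitive_pow hgτ, Nat.factorial_succ]
          push_cast
          field_simp
          rfl

theorem dyson_series_summable_general
    {A : Type*} [NormedRing A] [NormedAlgebra ℂ A]
    (R : ℝ → A) (β : ℝ → ℝ)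
    (hβ : Integrable β (volume : Measure ℝ))
    (hRβ : ∀ᵐ τ ∂(volume : Measure ℝ), ‖R τ‖ ≤ β τ)
    (s t : ℝ) (hst : s ≤ t) :
    Summable fun k : ℕ =>
      ‖(Complex.I ^ (k + 1)) • timeOrderedIntegral R s (k + 1) t‖ := by
  have hsum : Summable fun k : ℕ ↦ ‖(1 : A)‖ * ((∫ u in s..t, β u) ^ (k + 1) / (k + 1)!) :=
    ((summable_nat_add_iff 1).2 (Real.summable_pow_div_factorial _)).mul_left _
  refine hsum.of_nonneg_of_le (fun _ ↦ norm_nonneg _) fun k ↦ ?_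
  rw [norm_smul, norm_pow, Complex.norm_I, one_pow, one_mul]
  exact norm_timeOrderedIntegral_le hβ.intervalIntegrable (hRβ.mono fun τ h _ ↦ h) (k + 1)
    ⟨hst, le_rfl⟩

theorem dyson_series_summable
    {A : Type*} [NormedRing A] [NormedAlgebra ℂ A] [CompleteSpace A]
    (R : ℝ → A) (β : ℝ → ℝ)
    (hR : AEStronglyMeasurable R (volume : Measure ℝ))
    (hβ : Integrable β (volume : Measure ℝ))
    (hRβ : ∀ᵐ τ ∂(volume : Measure ℝ), ‖R τ‖ ≤ β τ)
    (s t : ℝ) (hst : s ≤ t) :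
    Summable fun k : ℕ =>
      ‖(Complex.I ^ (k + 1)) • timeOrderedIntegral R s (k + 1) t‖ :=
  dyson_series_summable_general R β hβ hRβ s t hst
end

section
/- Let A be a complete normed ring with unit 1, R : ϝ → A Bochner measurable, β : ℝ → ℝ integrable with ‖R(τ)‖ ≤ β(τ) a.e., and for s ≤ t let Q(t,s) = 1 + Σ_{k≥1} i^k ∫_s^t R(t₁)∫_s^{t₁} R(t₂) ⋯ ∫_s^{t_{k−1}} R(t_k) dt_k ⋯ dt₁ be the Dyson series. Then ‖Q(t,s) − 1‖ ≤ exp(∫_s^t β(τ) dτ) − 1. -/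
open MeasureTheory intervalIntegral Filter Topology

/-- The Dyson series
`Q(t,s) = 1 + Σ_{k≥1} i^k ∫_s^t R(t₁) ∫_s^{t₁} R(t₂) ⋯ ∫_s^{t_{k−1}} R(t_k) dt_k ⋯ dt₁`. -/
noncomputable def dyson {A : Type*} [NormedRing A] [NormedAlgebra ℂ A]
    (R : ℝ → A) (s t : ℝ) : A :=
  1 + ∑' k : ℕ, (Complex.I ^ (k + 1)) • timeOrderedIntegral R s (k + 1) t

/-! Writing `F τ = ∫_s^τ β`, the `k`-th time-ordered integral has norm at most `F(t)^k / k!`.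
This follows by induction from `∫_s^t β F^k / k! = F(t)^(k+1) / (k+1)!`, the fundamental
theorem of calculus for the absolutely continuous function `F^(k+1)`, whose derivative is
`(k+1) β F^k` a.e.
Summing over `k ≥ 1` gives `exp F(t) - 1`. -/

open Nat Set

theorem AbsolutelyContinuousOnInterval.pow {f : ℝ → ℝ} {a b : ℝ}
    (hf : AbsolutelyContinuousOnInterval f a b) :
    ∀ n : ℕ, AbsolutelyContinuousOnInterval (fun x ↦ f x ^ n) a b
  | 0 => by
    simpa using (LipschitzWith.const (1 : ℝ)).lipschitzOnWith.absolutelyContinuousOnInterval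
  | n + 1 => by simpa only [pow_succ] using (hf.pow n).fun_mul hf

theorem integral_mul_primitive_pow_div_factorial {f : ℝ → ℝ} {a b : ℝ}
    (hf : IntervalIntegrable f volume a b) (n : ℕ) :
    ∫ x in a..b, f x * ((∫ y in a..x, f y) ^ n / n !) =
      (∫ x in a..b, f x) ^ (n + 1) / (n + 1)! := by
  set F : ℝ → ℝ := fun x ↦ ∫ y in a..x, f y
  have hF : AbsolutelyContinuousOnInterval F a b :=
    hf.absolutelyContinuousOnInterval_intervalIntegral left_mem_uIcc
  have hderiv : ∀ᵐ x, x ∈ uIoc a b →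
      f x * (F x ^ n / n !) = deriv (fun x ↦ ((n + 1)! : ℝ)⁻¹ * F x ^ (n + 1)) x := by
    filter_upwards [hf.ae_hasDerivAt_integral] with x hx hxab
    have hFx : HasDerivAt F (f x) x := hx (uIoc_subset_uIcc hxab) a left_mem_uIcc
    rw [((hFx.fun_pow (n + 1)).const_mul _).deriv]
    push_cast [Nat.factorial_succ]
    field_simp
  rw [intervalIntegral.integral_congr_ae hderiv,
    ((hF.pow (n + 1)).const_mul _).integral_deriv_eq_sub]
  simp [F, div_eq_inv_mul]

theorem Real.hasSum_pow_succ_div_factorial_succ (x : ℝ) :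
    HasSum (fun k : ℕ ↦ x ^ (k + 1) / (k + 1)!) (Real.exp x - 1) := by
  rw [Real.exp_eq_exp_ℝ]
  simpa using (hasSum_nat_add_iff' 1).mpr (NormedSpace.expSeries_div_hasSum_exp x)

section TimeOrderedIntegral

variable {A : Type*} [NormedRing A] [NormedSpace ℝ A] {R : ℝ → A} {β : ℝ → ℝ} {s t : ℝ}

theorem norm_timeOrderedIntegral_succ_le_of_ae_le (hβ : Integrable β) (hst : s ≤ t) {k : ℕ}
    (h : ∀ᵐ τ, τ ∈ Ioc s t →
      ‖R τ * timeOrderedIntegral R s k τ‖ ≤ β τ * ((∫ σ in s..τ, β σ) ^ k / k !)) :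
    ‖timeOrderedIntegral R s (k + 1) t‖ ≤ (∫ τ in s..t, β τ) ^ (k + 1) / (k + 1)! := by
  have hbound : IntervalIntegrable (fun τ ↦ β τ * ((∫ σ in s..τ, β σ) ^ k / k !)) volume s t :=
    hβ.intervalIntegrable.mul_continuousOn
      (((hβ.continuous_primitive s).pow k).div_const _).continuousOn
  calc ‖timeOrderedIntegral R s (k + 1) t‖
      ≤ ∫ τ in s..t, β τ * ((∫ σ in s..τ, β σ) ^ k / k !) :=
        intervalIntegral.norm_integral_le_of_norm_le hst h hbound
    _ = (∫ τ in s..t, β τ) ^ (k + 1) / (k + 1)! :=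
        integral_mul_primitive_pow_div_factorial hβ.intervalIntegrable k

theorem norm_timeOrderedIntegral_succ_le (hβ : Integrable β) (hRβ : ∀ᵐ τ, ‖R τ‖ ≤ β τ)
    (k : ℕ) (hst : s ≤ t) :
    ‖timeOrderedIntegral R s (k + 1) t‖ ≤ (∫ τ in s..t, β τ) ^ (k + 1) / (k + 1)! := by
  induction k generalizing t with
  | zero =>
    refine norm_timeOrderedIntegral_succ_le_of_ae_le hβ hst ?_
    filter_upwards [hRβ] with τ hτ _
    simpa [timeOrderedIntegral] using hτ
  | succ k ih =>
    refine norm_timeOrderedIntegral_succ_le_of_ae_le hβ hst ?_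
    filter_upwards [hRβ] with τ hRτ hτ
    exact norm_mul_le_of_le hRτ (ih hτ.1.le)

end TimeOrderedIntegral

theorem dyson_sub_one_norm_le_general
    {A : Type*} [NormedRing A] [NormedAlgebra ℂ A]
    (R : ℝ → A) (β : ℝ → ℝ)
    (hβ : Integrable β (volume : Measure ℝ))
    (hRβ : ∀ᵐ τ ∂(volume : Measure ℝ), ‖R τ‖ ≤ β τ)
    (s t : ℝ) (hst : s ≤ t) :
    ‖dyson R s t - 1‖ ≤ Real.exp (∫ τ in s..t, β τ) - 1 := by
  rw [dyson, add_sub_cancel_left]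
  refine tsum_of_norm_bounded (Real.hasSum_pow_succ_div_factorial_succ _) fun k ↦ ?_
  rw [norm_smul, norm_pow, Complex.norm_I, one_pow, one_mul]
  exact norm_timeOrderedIntegral_succ_le hβ hRβ k hst

theorem dyson_sub_one_norm_le
    {A : Type*} [NormedRing A] [NormedAlgebra ℂ A] [CompleteSpace A]
    (R : ℝ → A) (β : ℝ → ℝ)
    (hR : AEStronglyMeasurable R (volume : Measure ℝ))
    (hβ : Integrable β (volume : Measure ℝ))
    (hRβ : ∀ᵐ τ ∂(volume : Measure ℝ), ‖R τ‖ ≤ β τ)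
    (s t : ℝ) (hst : s ≤ t) :
    ‖dyson R s t - 1‖ ≤ Real.exp (∫ τ in s..t, β τ) - 1 :=
  dyson_sub_one_norm_le_general R β hβ hRβ s t hst
end
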